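/- arXiv:1805.04998 — 4 statements merged into one kernel-verified Lean document; each statement's English description precedes it below -/
import Mathlib

section
/- Let (A, ∗, α) be a multiplicative Hom-superalgebra (not assumed Hom-associative). Define the supercommutator [x,y] := x∗y − (−1)^{|x||y|} y∗x and the ternary operation {x,y,z} := as_α(x,y,z). Then for all homogeneous x, y, z ∈ A the Hom-super Akivis identity holds: ↻_{(x,y,z)}(−1)^{|x||z|}[[x,y],α(z)] = ↻_{(x,y,z)}(−1)^{|x||z|}( {x,y,z} − (−1)^{|x||y|}{y,x,z} ), where ↻_{(x,y,z)}(−1)^{|x||z|}F(x,y,z) denotes the graded cyclic sum (−1)^{|x||z|}F(x,y,z) + (−1)^{|y||x|}F(y,z,x) + (−1)^{|z||y|}F(z,x,y). -/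
/-! Expanding the double supercommutator, its terms `(x∗y)∗α(z)` are exactly those of the
associators, so each cyclic term reduces to products `α(·)∗(·∗·)`. With the sign rules
`(−1)^{(i+j)k} = (−1)^{ik}(−1)^{jk}` and `((−1)^{ik})² = 1` these cancel in pairs across the
graded cyclic sum. -/

/-- A (multiplicative) Hom-superalgebra: a `ℤ/2`-graded `K`-vector space `L = L₀ ⊕ L₁`
with a parity-respecting bilinear operation `op` and an even multiplicative linear map `map`. -/
structure HomSuperalgebra (K : Type*) [Field K] (L : Type*) [AddCommGroup L] [Module K L] where
  grading : ZMod 2 → Submodule K L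
  internal : DirectSum.IsInternal grading
  op : L →ₗ[K] L →ₗ[K] L
  op_mem : ∀ {i j : ZMod 2} {x y : L}, x ∈ grading i → y ∈ grading j → op x y ∈ grading (i + j)
  map : L →ₗ[K] L
  map_even : ∀ {i : ZMod 2} {x : L}, x ∈ grading i → map x ∈ grading i
  map_op : ∀ x y : L, map (op x y) = op (map x) (map y)

namespace HomSuperalgebra

variable {K : Type*} [Field K] {L : Type*} [AddCommGroup L] [Module K L]

/-- The sign `(−1)^{ij}` attached to parities `i, j`. -/
def sgn (K : Type*) [Field K] (i j : ZMod 2) : K := (-1 : K) ^ (i.val * j.val)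

/-- The supercommutator `[x,y] := x∗y − (−1)^{|x||y|} y∗x` of homogeneous elements
of parities `i` and `j`. -/
def br (A : HomSuperalgebra K L) (i j : ZMod 2) (x y : L) : L :=
  A.op x y - sgn K i j • A.op y x

/-- The Hom-associator `as_α(x,y,z) := (x∗y)∗α(z) − α(x)∗(y∗z)`. -/
def assoc (A : HomSuperalgebra K L) (x y z : L) : L :=
  A.op (A.op x y) (A.map z) - A.op (A.map x) (A.op y z)

/-- The ternary operation `{x,y,z} := −(x∗y)∗α(z)`. -/
def trip (A : HomSuperalgebra K L) (x y z : L) : L :=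
  -(A.op (A.op x y) (A.map z))

/-- The left Hom-Leibniz superidentity:
`α(x)∗(y∗z) = (x∗y)∗α(z) + (−1)^{|x||y|} α(y)∗(x∗z)` for homogeneous `x, y, z`. -/
def IsLeftLeibniz (A : HomSuperalgebra K L) : Prop :=
  ∀ (i j k : ZMod 2) (x y z : L),
    x ∈ A.grading i → y ∈ A.grading j → z ∈ A.grading k →
      A.op (A.map x) (A.op y z)
        = A.op (A.op x y) (A.map z) + sgn K i j • A.op (A.map y) (A.op x z)

end HomSuperalgebra

open HomSuperalgebra

variable {K : Type*} [Field K] {L : Type*} [AddCommGroup L] [Module K L]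

namespace HomSuperalgebra

theorem sgn_comm (i j : ZMod 2) : sgn K i j = sgn K j i := by
  rw [sgn, sgn, mul_comm]

theorem sgn_add_left (i j k : ZMod 2) : sgn K (i + j) k = sgn K i k * sgn K j k := by
  rw [sgn, sgn, sgn, ← pow_add, ZMod.val_add, ← add_mul, neg_one_pow_eq_pow_mod_two,
    Nat.mod_mul_mod, ← neg_one_pow_eq_pow_mod_two]

theorem sgn_mul_self (i j : ZMod 2) : sgn K i j * sgn K i j = 1 := by
  rw [sgn, ← pow_add, ← two_mul, pow_mul, neg_one_sq, one_pow]

theorem smul_br_br_sub_assoc (A : HomSuperalgebra K L) (i j k : ZMod 2) (x y z : L) :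
    sgn K i k • (A.br (i + j) k (A.br i j x y) (A.map z)
        - (A.assoc x y z - sgn K i j • A.assoc y x z))
      = sgn K i k • (A.op (A.map x) (A.op y z) - sgn K i j • A.op (A.map y) (A.op x z))
        - sgn K j k • (A.op (A.map z) (A.op x y) - sgn K i j • A.op (A.map z) (A.op y x)) := by
  simp only [br, assoc, sgn_add_left, map_sub, map_smul, LinearMap.sub_apply,
    LinearMap.smul_apply]
  linear_combination (norm := module) -sgn_mul_self (K := K) i k •
    (sgn K j k • A.op (A.map z) (A.op x y) - (sgn K i j * sgn K j k) • A.op (A.map z) (A.op y x))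

end HomSuperalgebra

theorem homSuperAkivis_identity_general (A : HomSuperalgebra K L)
    (i j k : ZMod 2) (x y z : L) :
    sgn K i k • A.br (i + j) k (A.br i j x y) (A.map z)
      + sgn K j i • A.br (j + k) i (A.br j k y z) (A.map x)
      + sgn K k j • A.br (k + i) j (A.br k i z x) (A.map y)
    = sgn K i k • (A.assoc x y z - sgn K i j • A.assoc y x z)
      + sgn K j i • (A.assoc y z x - sgn K j k • A.assoc z y x)
      + sgn K k j • (A.assoc z x y - sgn K k i • A.assoc x z y) := by
  have hxyz := A.smul_br_br_sub_assoc i j k x y z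
  have hyzx := A.smul_br_br_sub_assoc j k i y z x
  have hzxy := A.smul_br_br_sub_assoc k i j z x y
  simp only [sgn_comm (K := K) k i, sgn_comm (K := K) j i, sgn_comm (K := K) k j] at *
  linear_combination (norm := module) hxyz + hyzx + hzxy

/-- the Hom-super Akivis identity for the supercommutator and Hom-associator of
any multiplicative (not necessarily Hom-associative) Hom-superalgebra. -/
theorem homSuperAkivis_identity (A : HomSuperalgebra K L)
    (i j k : ZMod 2) (x y z : L)
    (hx : x ∈ A.grading i) (hy : y ∈ A.grading j) (hz : z ∈ A.grading k) :
    sgn K i k • A.br (i + j) k (A.br i j x y) (A.map z)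
      + sgn K j i • A.br (j + k) i (A.br j k y z) (A.map x)
      + sgn K k j • A.br (k + i) j (A.br k i z x) (A.map y)
    = sgn K i k • (A.assoc x y z - sgn K i j • A.assoc y x z)
      + sgn K j i • (A.assoc y z x - sgn K j k • A.assoc z y x)
      + sgn K k j • (A.assoc z x y - sgn K k i • A.assoc x z y) :=
  homSuperAkivis_identity_general A i j k x y z
end

section
/- Let (L, ∗, α) be a left Hom-Leibniz superalgebra and define the supercommutator [x,y] := x∗y − (−1)^{|x||y|} y∗x. Then the bracket [,] satisfies the Hom-super-Jacobi identity ↻_{(x,y,z)}(−1)^{|x||z|}[[x,y],α(z)] = 0 for all homogeneous x, y, z ∈ L if and only if ↻_{(x,y,z)}(−1)^{|x||z|}(x∗y)∗α(z) = 0 for all homogeneous x, y, z ∈ L, where ↻_{(x,y,z)}(−1)^{|x||z|}F(x,y,z) denotes the graded cyclic sum (−1)^{|x||z|}F(x,y,z) + (−1)^{|y||x|}F(y,z,x) + (−1)^{|z||y|}F(z,x,y). -/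
open HomSuperalgebra

variable {K : Type*} [Field K] {L : Type*} [AddCommGroup L] [Module K L]

namespace HomSuperalgebra

theorem parity_eq_zero_or_eq_one (i : ZMod 2) : i = 0 ∨ i = 1 := by
  revert i; decide

theorem sgn_zero_left (j : ZMod 2) : sgn K 0 j = 1 := by simp [sgn]

theorem sgn_zero_right (i : ZMod 2) : sgn K i 0 = 1 := by simp [sgn]

theorem sgn_one_one : sgn K 1 1 = -1 := by simp [sgn, ZMod.val_one]

def leibnizDefect (A : HomSuperalgebra K L) (i j : ZMod 2) (x y z : L) : L :=
  A.op (A.map x) (A.op y z) - A.op (A.op x y) (A.map z) - sgn K i j • A.op (A.map y) (A.op x z)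

theorem IsLeftLeibniz.leibnizDefect_eq_zero {A : HomSuperalgebra K L} (hL : A.IsLeftLeibniz)
    {i j k : ZMod 2} {x y z : L}
    (hx : x ∈ A.grading i) (hy : y ∈ A.grading j) (hz : z ∈ A.grading k) :
    A.leibnizDefect i j x y z = 0 := by
  rw [leibnizDefect, hL i j k x y z hx hy hz]
  abel

theorem superJacobi_sum_eq_add_leibnizDefect (A : HomSuperalgebra K L) (i j k : ZMod 2)
    (x y z : L) :
    sgn K i k • A.br (i + j) k (A.br i j x y) (A.map z)
      + sgn K j i • A.br (j + k) i (A.br j k y z) (A.map x)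
      + sgn K k j • A.br (k + i) j (A.br k i z x) (A.map y)
    = sgn K i k • A.op (A.op x y) (A.map z)
      + sgn K j i • A.op (A.op y z) (A.map x)
      + sgn K k j • A.op (A.op z x) (A.map y)
      + (sgn K i k * sgn K i j) • A.leibnizDefect j i y x z
      + (sgn K i k * sgn K j k) • A.leibnizDefect i k x z y
      + (sgn K i j * sgn K j k) • A.leibnizDefect k j z y x := by
  simp only [br, leibnizDefect, map_sub, map_smul, LinearMap.sub_apply, LinearMap.smul_apply]
  rcases parity_eq_zero_or_eq_one i with rfl | rfl <;>
    rcases parity_eq_zero_or_eq_one j with rfl | rfl <;>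
    rcases parity_eq_zero_or_eq_one k with rfl | rfl <;>
    simp only [sgn_zero_left, sgn_zero_right, sgn_one_one, zero_add, add_zero,
      CharTwo.add_self_eq_zero] <;> module

theorem IsLeftLeibniz.superJacobi_sum_eq {A : HomSuperalgebra K L} (hL : A.IsLeftLeibniz)
    {i j k : ZMod 2} {x y z : L}
    (hx : x ∈ A.grading i) (hy : y ∈ A.grading j) (hz : z ∈ A.grading k) :
    sgn K i k • A.br (i + j) k (A.br i j x y) (A.map z)
      + sgn K j i • A.br (j + k) i (A.br j k y z) (A.map x)
      + sgn K k j • A.br (k + i) j (A.br k i z x) (A.map y)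
    = sgn K i k • A.op (A.op x y) (A.map z)
      + sgn K j i • A.op (A.op y z) (A.map x)
      + sgn K k j • A.op (A.op z x) (A.map y) := by
  rw [A.superJacobi_sum_eq_add_leibnizDefect, hL.leibnizDefect_eq_zero hy hx hz,
    hL.leibnizDefect_eq_zero hx hz hy, hL.leibnizDefect_eq_zero hz hy hx]
  simp only [smul_zero, add_zero]

end HomSuperalgebra

/-- a left Hom-Leibniz superalgebra is Hom-super Lie admissible (its
supercommutator satisfies the Hom-super-Jacobi identity) iff
`↻ (−1)^{|x||z|}(x∗y)∗α(z) = 0` for all homogeneous `x, y, z`. -/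
theorem homSuperLie_admissible_iff (A : HomSuperalgebra K L) (hL : A.IsLeftLeibniz) :
    (∀ (i j k : ZMod 2) (x y z : L),
      x ∈ A.grading i → y ∈ A.grading j → z ∈ A.grading k →
        sgn K i k • A.br (i + j) k (A.br i j x y) (A.map z)
          + sgn K j i • A.br (j + k) i (A.br j k y z) (A.map x)
          + sgn K k j • A.br (k + i) j (A.br k i z x) (A.map y) = 0)
    ↔ (∀ (i j k : ZMod 2) (x y z : L),
      x ∈ A.grading i → y ∈ A.grading j → z ∈ A.grading k →
        sgn K i k • A.op (A.op x y) (A.map z)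
          + sgn K j i • A.op (A.op y z) (A.map x)
          + sgn K k j • A.op (A.op z x) (A.map y) = 0) := by
  constructor <;> intro H i j k x y z hx hy hz
  · rw [← hL.superJacobi_sum_eq hx hy hz]
    exact H i j k x y z hx hy hz
  · rw [hL.superJacobi_sum_eq hx hy hz]
    exact H i j k x y z hx hy hz
end

section
/- Let (L, ∗, α) be a left Hom-Leibniz superalgebra and [x,y] := x∗y − (−1)^{|x||y|} y∗x the supercommutator. Then for all homogeneous u, x, y, z ∈ L: ↻_{(x,y,z)}(−1)^{|x||z|} ([x,y] ∗ α(z)) ∗ α²(u) = 0, where ↻_{(x,y,z)}(−1)^{|x||z|}F(x,y,z) denotes the graded cyclic sum (−1)^{|x||z|}F(x,y,z) + (−1)^{|y||x|}F(y,z,x) + (−1)^{|z||y|}F(z,x,y). (Equivalently, with the ternary operation {a,b,c} := −(a∗b)∗α(c), one has ↻_{(x,y,z)}(−1)^{|x||z|}{[x,y], α(z), α(u)} = 0.) -/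
open HomSuperalgebra

variable {K : Type*} [Field K] {L : Type*} [AddCommGroup L] [Module K L]

namespace HomSuperalgebra

theorem sgn_add_right (i j k : ZMod 2) : sgn K i (j + k) = sgn K i j * sgn K i k := by
  rw [sgn, sgn, sgn, ← pow_add, ← mul_add, neg_one_pow_eq_pow_mod_two, ZMod.val_add,
    Nat.mul_mod_mod, ← neg_one_pow_eq_pow_mod_two]

namespace IsLeftLeibniz

variable {A : HomSuperalgebra K L} (hL : A.IsLeftLeibniz) {i j k l : ZMod 2} {x y z v : L}
include hL

theorem op_op_map_swap (hx : x ∈ A.grading i) (hy : y ∈ A.grading j) (hz : z ∈ A.grading k) :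
    A.op (A.op x y) (A.map z) = -(sgn K i j • A.op (A.op y x) (A.map z)) := by
  have hxy := hL _ _ _ x y z hx hy hz
  have hyx := hL _ _ _ y x z hy hx hz
  rw [sgn_comm j i] at hyx
  linear_combination (norm := module)
    -hxy - sgn K i j • hyx - sgn_mul_self (K := K) i j • A.op (A.map x) (A.op y z)

theorem op_br_map (hx : x ∈ A.grading i) (hy : y ∈ A.grading j) (hz : z ∈ A.grading k) :
    A.op (A.br i j x y) (A.map z) = (2 : K) • A.op (A.op x y) (A.map z) := by
  rw [br, map_sub, map_smul, LinearMap.sub_apply, LinearMap.smul_apply,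
    hL.op_op_map_swap hy hx hz, sgn_comm j i]
  linear_combination (norm := module) sgn_mul_self (K := K) i j • A.op (A.op x y) (A.map z)

theorem cyclic_sum_op_op_map_op_map (hx : x ∈ A.grading i) (hy : y ∈ A.grading j)
    (hz : z ∈ A.grading k) (hv : v ∈ A.grading l) :
    sgn K i k • A.op (A.op (A.op x y) (A.map z)) (A.map v)
      + sgn K j i • A.op (A.op (A.op y z) (A.map x)) (A.map v)
      + sgn K k j • A.op (A.op (A.op z x) (A.map y)) (A.map v) = 0 := by
  have leibniz := congrArg (A.op · (A.map v)) (hL _ _ _ x y z hx hy hz)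
  simp only [map_add, map_smul, LinearMap.add_apply, LinearMap.smul_apply] at leibniz
  have swap_x := hL.op_op_map_swap (A.map_even hx) (A.op_mem hy hz) hv
  have swap_y := hL.op_op_map_swap (A.map_even hy) (A.op_mem hx hz) hv
  have swap_xz := congrArg (A.op · (A.map v)) (hL.op_op_map_swap hx hz hy)
  simp only [map_neg, map_smul, LinearMap.neg_apply, LinearMap.smul_apply] at swap_xz
  rw [sgn_add_right] at swap_x swap_y
  rw [sgn_comm j i] at swap_y ⊢
  rw [sgn_comm k j]
  set a := sgn K i j
  set b := sgn K i k
  set c := sgn K j k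
  have ha : a * a = 1 := sgn_mul_self i j
  have hb : b * b = 1 := sgn_mul_self i k
  linear_combination (norm := module)
    -b • leibniz + b • swap_x - (a * b) • swap_y + (a ^ 2 * b * c) • swap_xz
      - hb • (a • A.op (A.op (A.op y z) (A.map x)) (A.map v))
      - (c * a ^ 2) • hb • A.op (A.op (A.op z x) (A.map y)) (A.map v)
      - c • ha • A.op (A.op (A.op z x) (A.map y)) (A.map v)

end IsLeftLeibniz
end HomSuperalgebra

/-- SHLY6: in a left Hom-Leibniz superalgebra, the graded cyclic sum (in
`x, y, z`) of `([x,y] ∗ α(z)) ∗ α²(u)` vanishes. -/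
theorem shly6 (A : HomSuperalgebra K L) (hL : A.IsLeftLeibniz)
    (i j k p : ZMod 2) (x y z u : L)
    (hx : x ∈ A.grading i) (hy : y ∈ A.grading j) (hz : z ∈ A.grading k)
    (hu : u ∈ A.grading p) :
    sgn K i k • A.op (A.op (A.br i j x y) (A.map z)) (A.map (A.map u))
      + sgn K j i • A.op (A.op (A.br j k y z) (A.map x)) (A.map (A.map u))
      + sgn K k j • A.op (A.op (A.br k i z x) (A.map y)) (A.map (A.map u)) = 0 := by
  rw [hL.op_br_map hx hy hz, hL.op_br_map hy hz hx, hL.op_br_map hz hx hy]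
  simp only [map_smul, LinearMap.smul_apply]
  linear_combination (norm := module)
    (2 : K) • hL.cyclic_sum_op_op_map_op_map hx hy hz (A.map_even hu)
end

section
/- Let (L, ∗, α) be a left Hom-Leibniz superalgebra and {a,b,c} := −(a∗b)∗α(c). Then for all homogeneous u, v, w, x, y ∈ L: {α²(x), α²(y), {u,v,w}} = {{x,y,u}, α²(v), α²(w)} + (−1)^{|u|(|x|+|y|)} {α²(u), {x,y,v}, α²(w)} + (−1)^{(|x|+|y|)(|u|+|v|)} {α²(u), α²(v), {x,y,w}}. -/
open HomSuperalgebra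

variable {K : Type*} [Field K] {L : Type*} [AddCommGroup L] [Module K L]

namespace HomSuperalgebra

theorem sgn_eq_neg_one_pow {m n : ℕ} {i j : ZMod 2} (hi : (m : ZMod 2) = i)
    (hj : (n : ZMod 2) = j) : sgn K i j = (-1) ^ (m * n) := by
  subst hi hj
  rw [sgn, ZMod.val_natCast, ZMod.val_natCast, neg_one_pow_eq_pow_mod_two, ← Nat.mul_mod,
    ← neg_one_pow_eq_pow_mod_two]

theorem IsLeftLeibniz.trip_map_map_trip {A : HomSuperalgebra K L} (hL : A.IsLeftLeibniz)
    {i j p q r : ZMod 2} {x y u v w : L}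
    (hx : x ∈ A.grading i) (hy : y ∈ A.grading j)
    (hu : u ∈ A.grading p) (hv : v ∈ A.grading q) (hw : w ∈ A.grading r) :
    A.trip (A.map (A.map x)) (A.map (A.map y)) (A.trip u v w)
      = A.trip (A.trip x y u) (A.map (A.map v)) (A.map (A.map w))
        + sgn K (i + j) p • A.trip (A.map (A.map u)) (A.trip x y v) (A.map (A.map w))
        + sgn K (i + j) (p + q) • A.trip (A.map (A.map u)) (A.map (A.map v)) (A.trip x y w) := by
  have hxy : A.op x y ∈ A.grading (i + j) := A.op_mem hx hy
  have outer := hL _ _ r _ _ _ (A.map_even hxy) (A.op_mem (A.map_even hu) (A.map_even hv))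
    (A.map_even (A.map_even hw))
  have inner := hL _ _ q _ _ _ hxy (A.map_even hu) (A.map_even hv)
  simp only [trip, map_op, map_neg, LinearMap.neg_apply, neg_neg] at outer inner ⊢
  rw [outer, inner]
  simp only [map_add, map_smul, LinearMap.add_apply, LinearMap.smul_apply]

end HomSuperalgebra

/-- SHLY8: in a left Hom-Leibniz superalgebra, with `{a,b,c} := −(a∗b)∗α(c)`,
the ternary operation satisfies the Hom-super-Nambu-type derivation identity. -/
theorem shly8 (A : HomSuperalgebra K L) (hL : A.IsLeftLeibniz)
    (i j p q r : ZMod 2) (x y u v w : L)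
    (hx : x ∈ A.grading i) (hy : y ∈ A.grading j)
    (hu : u ∈ A.grading p) (hv : v ∈ A.grading q) (hw : w ∈ A.grading r) :
    A.trip (A.map (A.map x)) (A.map (A.map y)) (A.trip u v w)
      = A.trip (A.trip x y u) (A.map (A.map v)) (A.map (A.map w))
        + ((-1 : K) ^ (p.val * (i.val + j.val))) •
            A.trip (A.map (A.map u)) (A.trip x y v) (A.map (A.map w))
        + ((-1 : K) ^ ((i.val + j.val) * (p.val + q.val))) •
            A.trip (A.map (A.map u)) (A.map (A.map v)) (A.trip x y w) := by
  have hij : ((i.val + j.val : ℕ) : ZMod 2) = i + j := by simp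
  have hpq : ((p.val + q.val : ℕ) : ZMod 2) = p + q := by simp
  rw [hL.trip_map_map_trip hx hy hu hv hw, sgn_comm (i + j) p,
    sgn_eq_neg_one_pow (ZMod.natCast_zmod_val p) hij, sgn_eq_neg_one_pow hij hpq]
end
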